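/- arXiv:2511.13659 — 6 statements merged into one kernel-verified Lean document; each statement's English description precedes it below -/
import Mathlib

section
/- Let $K$ be a number field of degree $d$ and let $M$ be a module lattice of rank $r$ over the ring of integers of $K$ (so $M$ has $\mathbb{Z}$-rank $n = rd$). For any index $1 \le j \le rd$, the successive minima satisfy $\lambda^K_{\lceil j/d \rceil}(M) \le \lambda_j(M) \le \Gamma_K \cdot \lambda^K_{\lceil j/d \rceil}(M)$, where $\lambda_j$ denotes the usual ($\mathbb{Q}$-linear independence) successive minima and $\lambda^K_k$ denotes the $K$-successive minima ($K$-linear independence). -/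
open scoped NumberField

/-- The `j`-th successive minimum of a set `M` (w.r.t. `R`-linear independence):
the infimum of all `λ > 0` such that `M` contains `j` `R`-linearly independent
vectors of norm at most `λ`. -/
noncomputable def succMin (R : Type*) [Semiring R] {V : Type*} [NormedAddCommGroup V]
    [Module R V] (M : Set V) (j : ℕ) : ℝ :=
  sInf {lam : ℝ | 0 < lam ∧ ∃ v : Fin j → V,
    (∀ i, v i ∈ M) ∧ LinearIndependent R v ∧ ∀ i, ‖v i‖ ≤ lam}

/-
Lower bound: `j` vectors that are independent over `ℚ` span a `K`-space of `ℚ`-dimension at least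
`j`, hence of `K`-dimension at least `⌈j/d⌉`, so `⌈j/d⌉` of them are independent over `K`.
Upper bound: given `K`-independent `x₁, …, x_k ∈ M` of norm at most `λ`, each rank-one lattice
`𝓞_K xᵢ` contains `d` vectors independent over `ℚ` of norm at most about `Γ λ`, and vectors taken
from the lines `K xᵢ` of `K`-independent vectors are jointly independent over `ℚ`, giving
`kd ≥ j` of them. A negative `Γ` forces all the minima involved to vanish.
-/

open Module Submodule Set

/-- `succMin R M j` is, by definition, the infimum of this set. -/
def succMinRadii (R : Type*) [Semiring R] {V : Type*} [NormedAddCommGroup V] [Module R V]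
    (M : Set V) (j : ℕ) : Set ℝ :=
  {lam : ℝ | 0 < lam ∧ ∃ v : Fin j → V,
    (∀ i, v i ∈ M) ∧ LinearIndependent R v ∧ ∀ i, ‖v i‖ ≤ lam}

section SuccMin

variable {R : Type*} [Semiring R] {V : Type*} [NormedAddCommGroup V] [Module R V]
  {M : Set V} {j : ℕ}

theorem bddBelow_succMinRadii : BddBelow (succMinRadii R M j) := ⟨0, fun _ h => h.1.le⟩

theorem succMin_nonneg : 0 ≤ succMin R M j := Real.sInf_nonneg fun _ h => h.1.le

theorem succMin_le {lam : ℝ} (h : lam ∈ succMinRadii R M j) : succMin R M j ≤ lam :=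
  csInf_le bddBelow_succMinRadii h

theorem mem_succMinRadii {ι : Type*} [Fintype ι] {v : ι → V} (hj : j ≤ Fintype.card ι)
    (hvM : ∀ i, v i ∈ M) (hv : LinearIndependent R v) {lam : ℝ} (hlam : 0 < lam)
    (hnorm : ∀ i, ‖v i‖ ≤ lam) : lam ∈ succMinRadii R M j := by
  obtain ⟨e⟩ := Function.Embedding.nonempty_of_card_le (α := Fin j) (β := ι)
    (by rw [Fintype.card_fin]; exact hj)
  exact ⟨hlam, v ∘ e, fun i => hvM (e i), hv.comp e e.injective, fun i => hnorm (e i)⟩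

theorem succMinRadii_nonempty {ι : Type*} [Fintype ι] {v : ι → V} (hj : j ≤ Fintype.card ι)
    (hvM : ∀ i, v i ∈ M) (hv : LinearIndependent R v) : (succMinRadii R M j).Nonempty := by
  obtain ⟨B, hB⟩ := Finite.exists_le fun i => ‖v i‖
  exact ⟨max B 1, mem_succMinRadii hj hvM hv (by positivity)
    fun i => (hB i).trans (le_max_left _ _)⟩

theorem le_mul_succMin {a c : ℝ} (hne : (succMinRadii R M j).Nonempty) (hc : 0 ≤ c)
    (h : ∀ lam ∈ succMinRadii R M j, a ≤ c * lam) : a ≤ c * succMin R M j := by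
  rcases hc.eq_or_lt with rfl | hc
  · obtain ⟨lam, hlam⟩ := hne
    simpa using h lam hlam
  · rw [← div_le_iff₀' hc]
    exact le_csInf hne fun lam hlam => (div_le_iff₀' hc).2 (h lam hlam)

theorem exists_norm_lt_of_succMin_lt (hne : (succMinRadii R M j).Nonempty) {c : ℝ}
    (h : succMin R M j < c) :
    ∃ v : Fin j → V, (∀ i, v i ∈ M) ∧ LinearIndependent R v ∧ ∀ i, ‖v i‖ < c := by
  obtain ⟨lam, ⟨-, v, hvM, hv, hnorm⟩, hlam⟩ := exists_lt_of_csInf_lt hne h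
  exact ⟨v, hvM, hv, fun i => (hnorm i).trans_lt hlam⟩

end SuccMin

section Tower

variable {F K V : Type*} [Field F] [Field K] [Algebra F K] [AddCommGroup V] [Module F V]
  [Module K V] [IsScalarTower F K V]

theorem LinearIndependent.sigma_of_mem_span_singleton {ι : Type*} {κ : ι → Type*}
    {x : ι → V} (hx : LinearIndependent K x) {w : ∀ i, κ i → V} (hw : ∀ i t, w i t ∈ K ∙ x i)
    (hind : ∀ i, LinearIndependent F (w i)) :
    LinearIndependent F fun p : Σ i, κ i => w p.1 p.2 := by
  have hspan (i : ι) : span F (range (w i)) ≤ (K ∙ x i).restrictScalars F :=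
    span_le.2 (range_subset_iff.2 (hw i))
  refine linearIndependent_iUnion_finite hind fun i t _ hi => ?_
  have hspan_t : ⨆ i' ∈ t, span F (range (w i')) ≤ (⨆ i' ∈ t, K ∙ x i').restrictScalars F :=
    iSup₂_le fun i' hi' =>
      (hspan i').trans ((restrictScalars_le F).2 (le_biSup (fun i' => K ∙ x i') hi'))
  have hdisj := hx.iSupIndep_span_singleton.disjoint_biSup hi
  exact disjoint_def.2 fun v hvi hvt => disjoint_def.1 hdisj v (hspan i hvi) (hspan_t hvt)

theorem exists_embedding_linearIndependent_comp [FiniteDimensional F K] {j : ℕ} {v : Fin j → V}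
    (hv : LinearIndependent F v) :
    ∃ e : Fin ⌈(j : ℚ) / finrank F K⌉₊ ↪ Fin j, LinearIndependent K (v ∘ e) := by
  obtain ⟨κ, a, ha, hspan, hli⟩ := exists_linearIndependent' K v
  have : Finite κ := Finite.of_injective a ha
  have : Fintype κ := Fintype.ofFinite κ
  set W := span K (range v)
  have hjW : j ≤ finrank F W := by
    have : FiniteDimensional K W := FiniteDimensional.span_of_finite K (finite_range v)
    have : FiniteDimensional F W := Module.Finite.trans K W
    have hvW : LinearIndependent F fun i => (⟨v i, subset_span (mem_range_self i)⟩ : W) :=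
      .of_comp (W.subtype.restrictScalars F) hv
    simpa using hvW.fintype_card_le_finrank
  have hcard : finrank K W = Fintype.card κ := hspan ▸ finrank_span_eq_card hli
  have hk : ⌈(j : ℚ) / finrank F K⌉₊ ≤ Fintype.card κ := by
    rw [Nat.ceil_le, div_le_iff₀ (by exact_mod_cast finrank_pos), ← hcard]
    exact_mod_cast hjW.trans_eq (by rw [← finrank_mul_finrank F K W, mul_comm])
  obtain ⟨e⟩ := Function.Embedding.nonempty_of_card_le (α := Fin ⌈(j : ℚ) / finrank F K⌉₊) (β := κ)
    (by rw [Fintype.card_fin]; exact hk)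
  exact ⟨e.trans ⟨a, ha⟩, hli.comp e e.injective⟩

end Tower

theorem succMinRadii_subset_ceil {F K V : Type*} [Field F] [Field K] [Algebra F K]
    [FiniteDimensional F K] [NormedAddCommGroup V] [Module F V] [Module K V]
    [IsScalarTower F K V] (M : Set V) (j : ℕ) :
    succMinRadii F M j ⊆ succMinRadii K M ⌈(j : ℚ) / finrank F K⌉₊ := by
  rintro lam ⟨hlam, v, hvM, hv, hnorm⟩
  obtain ⟨e, he⟩ := exists_embedding_linearIndependent_comp (K := K) hv
  exact ⟨hlam, v ∘ e, fun i => hvM (e i), he, fun i => hnorm (e i)⟩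

theorem Submodule.exists_linearIndependent_fractionRing {R K V : Type*} [CommRing R] [IsDomain R]
    [Field K] [Algebra R K] [IsFractionRing R K] [AddCommGroup V] [Module R V] [Module K V]
    [IsScalarTower R K V] (M : Submodule R V) [Module.Free R M] [Module.Finite R M] :
    ∃ x : Fin (finrank R M) → V, (∀ i, x i ∈ M) ∧ LinearIndependent K x := by
  let b := Module.finBasis R M
  refine ⟨fun i => b i, fun i => (b i).2, ?_⟩
  exact (b.linearIndependent.map' M.subtype M.ker_subtype).localization K (nonZeroDivisors R)

section NumberField

variable {K : Type*} [Field K] [NumberField K] {V : Type*} [AddCommGroup V] [Module ℚ V]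
  [Module K V] [Module (𝓞 K) V] [IsScalarTower ℚ K V] [IsScalarTower (𝓞 K) K V]

theorem exists_linearIndependent_rat_mem_span_singleton {x : V} (hx : x ≠ 0) :
    ∃ w : Fin (finrank ℚ K) → V, (∀ t, w t ∈ span (𝓞 K) {x}) ∧ LinearIndependent ℚ w := by
  let e := Fintype.equivFinOfCardEq (finrank_eq_card_basis (NumberField.integralBasis K)).symm
  let b := (NumberField.integralBasis K).reindex e
  have hker : LinearMap.ker ((LinearMap.toSpanSingleton K V x).restrictScalars ℚ) = ⊥ := by
    simpa using LinearMap.ker_toSpanSingleton K hx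
  refine ⟨fun t => b t • x, fun t => ?_, b.linearIndependent.map' _ hker⟩
  have hb : b t • x = NumberField.RingOfIntegers.basis K (e.symm t) • x := by
    simp [b, NumberField.integralBasis_apply, algebraMap_smul]
  simpa only [hb] using smul_mem _ _ (mem_span_singleton_self x)

end NumberField

section Lattice

variable {K : Type*} [Field K] [NumberField K] {V : Type*} [NormedAddCommGroup V] [Module ℚ V]
  [Module K V] [Module (𝓞 K) V] [IsScalarTower ℚ K V] [IsScalarTower (𝓞 K) K V]
  {M : Submodule (𝓞 K) V} {k j : ℕ} {x : Fin k → V}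

theorem succMinRadii_rat_nonempty (hxM : ∀ i, x i ∈ M) (hx : LinearIndependent K x)
    (hj : j ≤ k * finrank ℚ K) : (succMinRadii ℚ (M : Set V) j).Nonempty := by
  choose w hwx hw using fun i =>
    exists_linearIndependent_rat_mem_span_singleton (K := K) (hx.ne_zero i)
  refine succMinRadii_nonempty (v := fun p : Σ _, Fin _ => w p.1 p.2) (by simpa using hj)
    (fun p => (span_singleton_le_iff_mem _ _).2 (hxM p.1) (hwx p.1 p.2)) ?_
  exact hx.sigma_of_mem_span_singleton (fun i t => span_le_restrictScalars (𝓞 K) K _ (hwx i t)) hw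

theorem succMin_rat_le_of_forall_span_singleton (hxM : ∀ i, x i ∈ M) (hx : LinearIndependent K x)
    (hj : j ≤ k * finrank ℚ K) {μ : ℝ} (hμ : 0 ≤ μ)
    (h : ∀ i, succMin ℚ (span (𝓞 K) {x i} : Set V) (finrank ℚ K) ≤ μ) :
    succMin ℚ (M : Set V) j ≤ μ := by
  refine le_of_forall_pos_le_add fun δ hδ => ?_
  have hblock (i : Fin k) : ∃ w : Fin (finrank ℚ K) → V, (∀ t, w t ∈ span (𝓞 K) {x i}) ∧
      LinearIndependent ℚ w ∧ ∀ t, ‖w t‖ < μ + δ := by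
    obtain ⟨w, hwx, hw⟩ := exists_linearIndependent_rat_mem_span_singleton (K := K) (hx.ne_zero i)
    exact exists_norm_lt_of_succMin_lt (succMinRadii_nonempty (by simp) hwx hw)
      (by linarith [h i])
  choose w hwx hw hnorm using hblock
  refine succMin_le (mem_succMinRadii (v := fun p : Σ _, Fin _ => w p.1 p.2) (by simpa using hj)
    (fun p => (span_singleton_le_iff_mem _ _).2 (hxM p.1) (hwx p.1 p.2)) ?_ (by positivity)
    fun p => (hnorm p.1 p.2).le)
  exact hx.sigma_of_mem_span_singleton (fun i t => span_le_restrictScalars (𝓞 K) K _ (hwx i t)) hw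

theorem succMin_rat_le_max_mul (hj : j ≤ k * finrank ℚ K) {Γ : ℝ}
    (hΓ : ∀ x ∈ M, x ≠ 0 →
      succMin ℚ (span (𝓞 K) {x} : Set V) (finrank ℚ K) ≤
        Γ * succMin ℚ (span (𝓞 K) {x} : Set V) 1)
    {lam : ℝ} (hlam : lam ∈ succMinRadii K (M : Set V) k) :
    succMin ℚ (M : Set V) j ≤ max Γ 0 * lam := by
  obtain ⟨hlam, x, hxM, hx, hnorm⟩ := hlam
  refine succMin_rat_le_of_forall_span_singleton hxM hx hj (by positivity) fun i => ?_
  have hline : succMin ℚ (span (𝓞 K) {x i} : Set V) 1 ≤ lam :=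
    succMin_le (mem_succMinRadii (v := fun _ : Unit => x i) le_rfl
      (fun _ => mem_span_singleton_self (x i)) (linearIndependent_unique_iff.2 (hx.ne_zero i)) hlam
      fun _ => hnorm i)
  calc succMin ℚ (span (𝓞 K) {x i} : Set V) (finrank ℚ K)
      ≤ Γ * succMin ℚ (span (𝓞 K) {x i} : Set V) 1 := hΓ _ (hxM i) (hx.ne_zero i)
    _ ≤ max Γ 0 * succMin ℚ (span (𝓞 K) {x i} : Set V) 1 :=
      mul_le_mul_of_nonneg_right (le_max_left _ _) succMin_nonneg
    _ ≤ max Γ 0 * lam := mul_le_mul_of_nonneg_left hline (le_max_right _ _)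

end Lattice

theorem stmt0_general
    {K : Type*} [Field K] [NumberField K]
    {V : Type*} [NormedAddCommGroup V]
    [Module ℚ V] [Module K V] [Module (𝓞 K) V]
    [IsScalarTower ℚ K V] [IsScalarTower (𝓞 K) K V]
    (r : ℕ) (hr : 0 < r)
    (M : Submodule (𝓞 K) V)
    [Module.Free (𝓞 K) M] (hrank : Module.finrank (𝓞 K) M = r)
    (Γ : ℝ)
    (hΓ : ∀ x ∈ M, x ≠ 0 →
      succMin ℚ ((Submodule.span (𝓞 K) {x} : Submodule (𝓞 K) V) : Set V)
          (Module.finrank ℚ K) ≤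
        Γ * succMin ℚ ((Submodule.span (𝓞 K) {x} : Submodule (𝓞 K) V) : Set V) 1)
    (j : ℕ) (hj2 : j ≤ r * Module.finrank ℚ K) :
    succMin K (M : Set V) ⌈(j : ℚ) / (Module.finrank ℚ K : ℚ)⌉₊ ≤
        succMin ℚ (M : Set V) j ∧
      succMin ℚ (M : Set V) j ≤
        Γ * succMin K (M : Set V) ⌈(j : ℚ) / (Module.finrank ℚ K : ℚ)⌉₊ := by
  have : Module.Finite (𝓞 K) M := Module.finite_of_finrank_pos (hrank ▸ hr)
  obtain ⟨X, hXM, hX⟩ := M.exists_linearIndependent_fractionRing (K := K)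
  subst hrank
  set k := ⌈(j : ℚ) / finrank ℚ K⌉₊
  have hd : (0 : ℚ) < finrank ℚ K := by exact_mod_cast finrank_pos
  have hkr : k ≤ finrank (𝓞 K) M := Nat.ceil_le.2 ((div_le_iff₀ hd).2 (by exact_mod_cast hj2))
  have hjk : j ≤ k * finrank ℚ K := by
    have := (div_le_iff₀ hd).1 (Nat.le_ceil ((j : ℚ) / finrank ℚ K))
    exact_mod_cast this
  have hQ := succMinRadii_rat_nonempty hXM hX hj2
  have hK : (succMinRadii K (M : Set V) k).Nonempty :=
    succMinRadii_nonempty (by rwa [Fintype.card_fin]) hXM hX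
  have hlower : succMin K (M : Set V) k ≤ succMin ℚ (M : Set V) j :=
    csInf_le_csInf bddBelow_succMinRadii hQ (succMinRadii_subset_ceil _ _)
  have hupper : succMin ℚ (M : Set V) j ≤ max Γ 0 * succMin K (M : Set V) k :=
    le_mul_succMin hK (le_max_right _ _) fun _ hlam => succMin_rat_le_max_mul hjk hΓ hlam
  refine ⟨hlower, ?_⟩
  rcases le_or_gt 0 Γ with hΓ0 | hΓ0
  · rwa [max_eq_left hΓ0] at hupper
  · rw [max_eq_right hΓ0.le, zero_mul] at hupper
    rw [(hlower.trans hupper).antisymm succMin_nonneg, mul_zero]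
    exact hupper

/-- For a module lattice `M` of rank `r` over the ring of integers
of a number field `K` of degree `d`, and any `1 ≤ j ≤ rd`,
`λ^K_{⌈j/d⌉}(M) ≤ λ_j(M) ≤ Γ_K λ^K_{⌈j/d⌉}(M)`, where `Γ_K` is characterized by
the property `λ_d(𝓞_K x) ≤ Γ_K λ_1(𝓞_K x)` of rank-1 module lattices. -/
theorem stmt0
    {K : Type*} [Field K] [NumberField K]
    {V : Type*} [NormedAddCommGroup V]
    [Module ℚ V] [Module K V] [Module (𝓞 K) V]
    [IsScalarTower ℚ K V] [IsScalarTower (𝓞 K) K V]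
    (r : ℕ) (hr : 0 < r)
    (M : Submodule (𝓞 K) V) [DiscreteTopology M]
    [Module.Free (𝓞 K) M] (hrank : Module.finrank (𝓞 K) M = r)
    (Γ : ℝ)
    (hΓ : ∀ x ∈ M, x ≠ 0 →
      succMin ℚ ((Submodule.span (𝓞 K) {x} : Submodule (𝓞 K) V) : Set V)
          (Module.finrank ℚ K) ≤
        Γ * succMin ℚ ((Submodule.span (𝓞 K) {x} : Submodule (𝓞 K) V) : Set V) 1)
    (j : ℕ) (hj1 : 1 ≤ j) (hj2 : j ≤ r * Module.finrank ℚ K) :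
    succMin K (M : Set V) ⌈(j : ℚ) / (Module.finrank ℚ K : ℚ)⌉₊ ≤
        succMin ℚ (M : Set V) j ∧
      succMin ℚ (M : Set V) j ≤
        Γ * succMin K (M : Set V) ⌈(j : ℚ) / (Module.finrank ℚ K : ℚ)⌉₊ :=
  stmt0_general r hr M hrank Γ hΓ j hj2
end

section
/- Let $V$ be an $n$-dimensional Euclidean vector space, $\Lambda \subseteq V$ a full-rank lattice with Voronoi cell $\mathcal{V}_0$ around the origin, and $X \subseteq V$ a convex measurable set with $\mathcal{V}_0 \subseteq cX$ for some $c > 0$. Then for all $t, t' \in V$ and all $q > 2c$: $e^{-2nc/q} \cdot \frac{q^n \mathrm{vol}(X)}{\det(\Lambda)} \le |(\Lambda + t) \cap q(X + t')| \le e^{2nc/q} \cdot \frac{q^n \mathrm{vol}(X)}{\det(\Lambda)}$. -/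
open MeasureTheory Pointwise Module

def voronoiCell {V : Type*} [NormedAddCommGroup V] (Λ : Set V) : Set V :=
  {x : V | ∀ ℓ ∈ Λ, ‖x‖ ≤ ‖x - ℓ‖}

/-!
The translates `ℓ + 𝒱₀`, `ℓ ∈ Λ`, of the Voronoi cell cover `V` (nearest lattice points exist),
and two of them meet only inside a perpendicular bisector, a null set: `𝒱₀` is a fundamental
domain, of volume `det Λ`. If `S` is the set of lattice points in a translate of `qX`, then
`S + 𝒱₀` has volume `|S| det Λ` and, as `±𝒱₀ ⊆ cX` and `X` is convex, it lies inside the same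
translate of `(q + c)X` and almost covers that of `(q - c)X`. Comparing volumes gives
`(q - c)ⁿ vol X ≤ |S| det Λ ≤ (q + c)ⁿ vol X`; finally `e^{-2nc/q} ≤ (1 - c/q)ⁿ` once `q ≥ 2c`,
and `(1 + c/q)ⁿ ≤ e^{2nc/q}`.
-/

theorem Set.ncard_add_singleton_inter {α : Type*} [AddGroup α] (s A : Set α) (t : α) :
    ((s + {t}) ∩ A).ncard = (s ∩ (A + {-t})).ncard := by
  rw [← Set.ncard_image_of_injective (s ∩ (A + {-t})) (add_left_injective t),
    Set.image_inter (add_left_injective t)]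
  simp only [Set.add_singleton, Set.image_image, neg_add_cancel_right, Set.image_id']

section Lattice

variable {V : Type*} [NormedAddCommGroup V]

theorem Submodule.isClosed_of_discreteTopology (Λ : Submodule ℤ V) [DiscreteTopology Λ] :
    IsClosed (Λ : Set V) :=
  haveI : DiscreteTopology Λ.toAddSubgroup := ‹DiscreteTopology Λ›
  AddSubgroup.isClosed_of_discrete (H := Λ.toAddSubgroup)

theorem Submodule.finite_inter_of_isBounded [ProperSpace V] (Λ : Submodule ℤ V)
    [DiscreteTopology Λ] {B : Set V} (hB : Bornology.IsBounded B) :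
    ((Λ : Set V) ∩ B).Finite := by
  rw [Set.inter_comm]
  exact Metric.finite_isBounded_inter_isClosed DiscreteTopology.isDiscrete hB
    Λ.isClosed_of_discreteTopology

theorem isClosed_voronoiCell (Λ : Set V) : IsClosed (voronoiCell Λ) := by
  simp only [voronoiCell, Set.ofPred_forall]
  exact isClosed_biInter fun ℓ _ =>
    isClosed_le continuous_norm (continuous_id.sub continuous_const).norm

theorem neg_mem_voronoiCell {Λ : Submodule ℤ V} {x : V} (hx : x ∈ voronoiCell (Λ : Set V)) :
    -x ∈ voronoiCell (Λ : Set V) := fun ℓ hℓ => by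
  simpa [← norm_neg (-x - ℓ), add_comm] using hx (-ℓ) (neg_mem hℓ)

theorem exists_sub_mem_voronoiCell [ProperSpace V] (Λ : Submodule ℤ V) [DiscreteTopology Λ]
    (x : V) : ∃ ℓ ∈ Λ, x - ℓ ∈ voronoiCell (Λ : Set V) := by
  obtain ⟨ℓ, hℓ, hnearest⟩ :=
    Λ.isClosed_of_discreteTopology.exists_infDist_eq_dist ⟨0, Λ.zero_mem⟩ x
  refine ⟨ℓ, hℓ, fun ℓ' hℓ' => ?_⟩
  have := Metric.infDist_le_dist_of_mem (x := x) (Λ.add_mem hℓ hℓ')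
  rwa [hnearest, dist_eq_norm, dist_eq_norm, ← sub_sub] at this

theorem vadd_voronoiCell_inter_subset_perpBisector [InnerProductSpace ℝ V]
    (Λ : Submodule ℤ V) {g : V} (hg : g ∈ Λ) :
    (g +ᵥ voronoiCell (Λ : Set V)) ∩ voronoiCell (Λ : Set V) ⊆
      AffineSubspace.perpBisector 0 g := by
  rintro _ ⟨⟨y, hy, rfl⟩, hgy⟩
  rw [SetLike.mem_coe, AffineSubspace.mem_perpBisector_iff_dist_eq, dist_eq_norm, dist_eq_norm]
  simp only [vadd_eq_add, sub_zero, add_sub_cancel_left] at hgy ⊢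
  refine le_antisymm (by simpa using hgy g hg) ?_
  simpa [add_comm] using hy (-g) (neg_mem hg)

theorem isAddFundamentalDomain_voronoiCell [InnerProductSpace ℝ V] [FiniteDimensional ℝ V]
    [MeasurableSpace V] [BorelSpace V] (μ : Measure V) [μ.IsAddHaarMeasure]
    (Λ : Submodule ℤ V) [DiscreteTopology Λ] :
    IsAddFundamentalDomain Λ (voronoiCell (Λ : Set V)) μ := by
  refine .mk'' (isClosed_voronoiCell _).measurableSet.nullMeasurableSet
    (.of_forall fun x => ?_) (fun g hg => ?_) fun g => ?_
  · obtain ⟨ℓ, hℓ, hx⟩ := exists_sub_mem_voronoiCell Λ x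
    exact ⟨⟨-ℓ, neg_mem hℓ⟩, by simpa [Submodule.vadd_def, neg_add_eq_sub] using hx⟩
  · refine measure_mono_null (vadd_voronoiCell_inter_subset_perpBisector Λ g.2)
      (Measure.addHaar_affineSubspace μ _ ?_)
    simpa [eq_comm] using hg
  · exact (measurePreserving_add_left μ (g : V)).quasiMeasurePreserving

end Lattice

section Tiling

variable {V : Type*} [AddCommGroup V] [MeasurableSpace V] [MeasurableAdd V]
  {μ : Measure V} [μ.IsAddLeftInvariant] {Λ : Submodule ℤ V} {F : Set V}

theorem MeasureTheory.IsAddFundamentalDomain.measure_add_of_subset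
    (hF : IsAddFundamentalDomain Λ F μ) {S : Set V} (hS : S.Finite) (hSΛ : S ⊆ Λ) :
    μ (S + F) = S.ncard * μ F := by
  lift S to Finset V using hS
  have hvadd (a : V) : (fun x => a + x) '' F = a +ᵥ F := Set.image_vadd (t := F) (a := a)
  simp only [← Set.iUnion_add_left_image, Finset.mem_coe, hvadd, Set.ncard_coe_finset]
  rw [measure_biUnion_finset₀ (fun a ha b hb hab => ?_) fun a _ => hF.nullMeasurableSet.vadd a]
  · simp [measure_vadd]
  · exact hF.aedisjoint (i := ⟨a, hSΛ ha⟩) (j := ⟨b, hSΛ hb⟩) (by simpa using hab)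

end Tiling

section ConvexBody

variable {V : Type*} [NormedAddCommGroup V] [NormedSpace ℝ V] [MeasurableSpace V] [BorelSpace V]
  [FiniteDimensional ℝ V]

theorem MeasureTheory.Measure.addHaar_smul_add_singleton (μ : Measure V) [μ.IsAddHaarMeasure]
    {r : ℝ} (hr : 0 ≤ r) (X : Set V) (v : V) :
    μ (r • X + {v}) = ENNReal.ofReal (r ^ finrank ℝ V) * μ X := by
  rw [Set.add_singleton, Set.image_add_right, measure_preimage_add_right,
    Measure.addHaar_smul_of_nonneg μ hr]

variable {μ : Measure V} [μ.IsAddHaarMeasure] {Λ : Submodule ℤ V} [DiscreteTopology Λ]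
  {F X : Set V} {c q : ℝ}

theorem MeasureTheory.IsAddFundamentalDomain.ncard_inter_mul_measureReal_le
    (hF : IsAddFundamentalDomain Λ F μ) (hFX : F ⊆ c • X) (hXc : Convex ℝ X)
    (hXb : Bornology.IsBounded X) (hc : 0 ≤ c) (hq : 0 ≤ q) (v : V) :
    ((Λ : Set V) ∩ (q • X + {v})).ncard * μ.real F ≤ (q + c) ^ finrank ℝ V * μ.real X := by
  set S := (Λ : Set V) ∩ (q • X + {v})
  have hS : S.Finite :=
    Λ.finite_inter_of_isBounded ((hXb.smul₀ q).add Bornology.isBounded_singleton)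
  have hSF : S + F ⊆ (q + c) • X + {v} := calc
    S + F ⊆ q • X + {v} + c • X := Set.add_subset_add Set.inter_subset_right hFX
    _ = (q + c) • X + {v} := by rw [add_right_comm, hXc.add_smul hq hc]
  have hle := measure_mono (μ := μ) hSF
  rw [hF.measure_add_of_subset hS Set.inter_subset_left,
    Measure.addHaar_smul_add_singleton μ (by linarith)] at hle
  have hXfin : μ X ≠ ⊤ := hXb.measure_lt_top.ne
  simpa [measureReal_def, ENNReal.toReal_mul, pow_nonneg (add_nonneg hq hc)] using
    ENNReal.toReal_mono (by finiteness) hle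

theorem MeasureTheory.IsAddFundamentalDomain.le_ncard_inter_mul_measureReal
    (hF : IsAddFundamentalDomain Λ F μ) (hFneg : ∀ x ∈ F, -x ∈ F) (hFX : F ⊆ c • X)
    (hXc : Convex ℝ X) (hXb : Bornology.IsBounded X) (hc : 0 ≤ c) (hcq : c ≤ q) (v : V) :
    (q - c) ^ finrank ℝ V * μ.real X ≤ ((Λ : Set V) ∩ (q • X + {v})).ncard * μ.real F := by
  set S := (Λ : Set V) ∩ (q • X + {v})
  have hS : S.Finite :=
    Λ.finite_inter_of_isBounded ((hXb.smul₀ q).add Bornology.isBounded_singleton)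
  have hcover : ((q - c) • X + {v} : Set V) ≤ᵐ[μ] (S + F : Set V) := by
    filter_upwards [hF.ae_covers] with y ⟨g, hg⟩ hy
    refine ⟨-g, ⟨neg_mem g.2, ?_⟩, g +ᵥ y, hg, by simp [Submodule.vadd_def]⟩
    have : q • X + {v} = (q - c) • X + {v} + c • X := by
      rw [add_right_comm, ← hXc.add_smul (by linarith) hc, sub_add_cancel]
    rw [this]
    exact ⟨y, hy, -(g +ᵥ y), hFX (hFneg _ hg), by simp [Submodule.vadd_def]⟩
  have hle := measure_mono_ae hcover
  rw [hF.measure_add_of_subset hS Set.inter_subset_left,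
    Measure.addHaar_smul_add_singleton μ (by linarith)] at hle
  have hFfin : μ F ≠ ⊤ := ((hXb.smul₀ c).subset hFX).measure_lt_top.ne
  simpa [measureReal_def, ENNReal.toReal_mul, pow_nonneg (sub_nonneg.2 hcq)] using
    ENNReal.toReal_mono (by finiteness) hle

end ConvexBody

section ExpBounds

variable {c q : ℝ}

theorem add_le_mul_exp (hc : 0 ≤ c) (hq : 0 < q) : q + c ≤ q * Real.exp (2 * c / q) := by
  have := Real.add_one_le_exp (2 * c / q)
  have : q * (2 * c / q + 1) = q + 2 * c := by field_simp; ring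
  nlinarith

theorem mul_exp_neg_le_sub (hc : 0 ≤ c) (hq : 0 < q) (hcq : 2 * c ≤ q) :
    q * Real.exp (-(2 * c / q)) ≤ q - c := by
  have hexp := Real.add_one_le_exp (2 * c / q)
  rw [Real.exp_neg, ← div_eq_mul_inv, div_le_iff₀ (Real.exp_pos _)]
  have : (q - c) * (2 * c / q + 1) = q + c * (q - 2 * c) / q := by field_simp; ring
  nlinarith [div_nonneg (mul_nonneg hc (sub_nonneg.2 hcq)) hq.le]

theorem add_pow_le_exp_mul_pow (hc : 0 ≤ c) (hq : 0 < q) (n : ℕ) :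
    (q + c) ^ n ≤ Real.exp (2 * n * c / q) * q ^ n := calc
  (q + c) ^ n ≤ (q * Real.exp (2 * c / q)) ^ n :=
    pow_le_pow_left₀ (by linarith) (add_le_mul_exp hc hq) n
  _ = Real.exp (2 * n * c / q) * q ^ n := by
    rw [mul_pow, ← Real.exp_nat_mul, mul_comm]; ring_nf

theorem exp_mul_pow_le_sub_pow (hc : 0 ≤ c) (hq : 0 < q) (hcq : 2 * c ≤ q) (n : ℕ) :
    Real.exp (-(2 * n * c / q)) * q ^ n ≤ (q - c) ^ n := calc
  Real.exp (-(2 * n * c / q)) * q ^ n = (q * Real.exp (-(2 * c / q))) ^ n := by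
    rw [mul_pow, ← Real.exp_nat_mul, mul_comm]; ring_nf
  _ ≤ (q - c) ^ n := pow_le_pow_left₀ (by positivity) (mul_exp_neg_le_sub hc hq hcq) n

end ExpBounds

theorem stmt9_general {V : Type*} [NormedAddCommGroup V] [InnerProductSpace ℝ V]
    [FiniteDimensional ℝ V] [MeasurableSpace V] [BorelSpace V]
    (μ : Measure V) [μ.IsAddHaarMeasure]
    (n : ℕ) (hn : Module.finrank ℝ V = n)
    (Λ : Submodule ℤ V) [DiscreteTopology Λ] [IsZLattice ℝ Λ]
    (X : Set V) (hXc : Convex ℝ X)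
    (hXb : Bornology.IsBounded X)
    (c : ℝ) (hc : 0 < c) (hV : voronoiCell (Λ : Set V) ⊆ c • X)
    (t t' : V) (q : ℝ) (hq : 2 * c < q) :
    Real.exp (-(2 * n * c / q)) * (q ^ n * (μ X).toReal / ZLattice.covolume Λ μ)
        ≤ (((Λ : Set V) + {t}) ∩ (q • (X + {t'}))).ncard ∧
      ((((Λ : Set V) + {t}) ∩ (q • (X + {t'}))).ncard : ℝ)
        ≤ Real.exp (2 * n * c / q) * (q ^ n * (μ X).toReal / ZLattice.covolume Λ μ) := by
  have hq0 : 0 < q := by linarith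
  have hF := isAddFundamentalDomain_voronoiCell μ Λ
  have hFpos := ZLattice.covolume_pos Λ μ
  have hbody : q • (X + {t'}) + {-t} = q • X + {q • t' - t} := by
    rw [smul_add, Set.smul_set_singleton, add_assoc, Set.singleton_add_singleton, sub_eq_add_neg]
  rw [ZLattice.covolume_eq_measure_fundamentalDomain Λ μ hF] at hFpos ⊢
  rw [Set.ncard_add_singleton_inter, hbody, ← measureReal_def, mul_div_assoc', mul_div_assoc',
    le_div_iff₀ hFpos, div_le_iff₀ hFpos, ← mul_assoc, ← mul_assoc]
  have hlow := hF.le_ncard_inter_mul_measureReal (fun _ => neg_mem_voronoiCell) hV hXc hXb hc.le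
    (by linarith : c ≤ q) (q • t' - t)
  have hup := hF.ncard_inter_mul_measureReal_le hV hXc hXb hc.le hq0.le (q • t' - t)
  rw [hn] at hlow hup
  exact ⟨(mul_le_mul_of_nonneg_right (exp_mul_pow_le_sub_pow hc.le hq0 hq.le n)
      measureReal_nonneg).trans hlow,
    hup.trans (mul_le_mul_of_nonneg_right (add_pow_le_exp_mul_pow hc.le hq0 n) measureReal_nonneg)⟩

/-- Counting lattice points in a scaled translated convex body `X`
whose `c`-dilation contains the Voronoi cell:
`e^{-2nc/q} q^n vol(X)/det(Λ) ≤ |(Λ+t) ∩ q(X+t')| ≤ e^{2nc/q} q^n vol(X)/det(Λ)`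
for `q > 2c`. -/
theorem stmt9 {V : Type*} [NormedAddCommGroup V] [InnerProductSpace ℝ V]
    [FiniteDimensional ℝ V] [MeasurableSpace V] [BorelSpace V]
    (μ : Measure V) [μ.IsAddHaarMeasure]
    (n : ℕ) (hn : Module.finrank ℝ V = n)
    (Λ : Submodule ℤ V) [DiscreteTopology Λ] [IsZLattice ℝ Λ]
    (X : Set V) (hXc : Convex ℝ X) (hXm : MeasurableSet X)
    (hXb : Bornology.IsBounded X)
    (c : ℝ) (hc : 0 < c) (hV : voronoiCell (Λ : Set V) ⊆ c • X)
    (t t' : V) (q : ℝ) (hq : 2 * c < q) :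
    Real.exp (-(2 * n * c / q)) * (q ^ n * (μ X).toReal / ZLattice.covolume Λ μ)
        ≤ (((Λ : Set V) + {t}) ∩ (q • (X + {t'}))).ncard ∧
      ((((Λ : Set V) + {t}) ∩ (q • (X + {t'}))).ncard : ℝ)
        ≤ Real.exp (2 * n * c / q) * (q ^ n * (μ X).toReal / ZLattice.covolume Λ μ) :=
  stmt9_general μ n hn Λ X hXc hXb c hc hV t t' q hq
end

section
/- Let $\Lambda$ be a lattice in a Euclidean space $V$, let $t, w \in V$, and let $\sigma > 0$. Define $\rho_\sigma(x) = \exp(-\pi \|x\|^2/\sigma^2)$ and $\rho_\sigma(A) = \sum_{x \in A} \rho_\sigma(x)$ for countable sets $A$. Then $\rho_\sigma(\Lambda + t + w) + \rho_\sigma(\Lambda + t - w) \ge 2\,\rho_\sigma(w)\,\rho_\sigma(\Lambda + t)$. -/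
/-!
Expanding the squares, `ρ_σ(x + w) + ρ_σ(x - w) = 2 ρ_σ(x) ρ_σ(w) cosh(2π⟪x, w⟫/σ²)`, and
`cosh ≥ 1`; summing this pointwise bound over `x ∈ Λ + t` gives the claim. All three series
converge because `exp(-c r²) ≤ k! c⁻ᵏ r⁻²ᵏ` and `∑_{z ∈ Λ} ‖z - x‖⁻ⁿ` converges once `n`
exceeds the rank of `Λ`.
-/

/-- The Gaussian function `ρ_σ(x) = exp(-π ‖x‖²/σ²)`. -/
noncomputable def gaussFun {V : Type*} [NormedAddCommGroup V] (σ : ℝ) (x : V) : ℝ :=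
  Real.exp (-Real.pi * ‖x‖ ^ 2 / σ ^ 2)

open Real Module Nat

theorem Real.exp_neg_le_factorial_div_pow {x : ℝ} (hx : 0 < x) (k : ℕ) :
    exp (-x) ≤ k ! / x ^ k := by
  rw [exp_neg]
  refine inv_le_of_inv_le₀ (by positivity) ?_
  rw [inv_div]
  exact pow_div_factorial_le_exp x hx.le k

theorem ZLattice.summable_exp_neg_mul_norm_sub_sq {E : Type*} [NormedAddCommGroup E]
    [NormedSpace ℝ E] [FiniteDimensional ℝ E] (L : Submodule ℤ E) [DiscreteTopology L]
    {c : ℝ} (hc : 0 < c) (x : E) :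
    Summable fun z : L ↦ exp (-c * ‖(z : E) - x‖ ^ 2) := by
  set k := finrank ℤ L + 1
  refine Summable.of_norm_bounded_eventually
    ((summable_norm_sub_inv_pow L (2 * k) (by omega) x).mul_left (k ! / c ^ k)) ?_
  have hx : {z : L | (z : E) = x}.Finite :=
    Set.Subsingleton.finite fun a ha b hb ↦ Subtype.ext (ha.trans hb.symm)
  filter_upwards [hx.compl_mem_cofinite] with z hz
  have hpos : 0 < ‖(z : E) - x‖ := norm_pos_iff.mpr (sub_ne_zero.mpr hz)
  calc ‖exp (-c * ‖(z : E) - x‖ ^ 2)‖ = exp (-(c * ‖(z : E) - x‖ ^ 2)) := by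
        rw [norm_of_nonneg (exp_pos _).le, neg_mul]
    _ ≤ k ! / (c * ‖(z : E) - x‖ ^ 2) ^ k := exp_neg_le_factorial_div_pow (by positivity) k
    _ = k ! / c ^ k * ‖(z : E) - x‖⁻¹ ^ (2 * k) := by ring

section Gaussian

variable {V : Type*} [NormedAddCommGroup V]

theorem summable_gaussFun_add [NormedSpace ℝ V] [FiniteDimensional ℝ V]
    (Λ : Submodule ℤ V) [DiscreteTopology Λ] {σ : ℝ} (hσ : σ ≠ 0) (u : V) :
    Summable fun ℓ : Λ ↦ gaussFun σ ((ℓ : V) + u) := by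
  have hc : 0 < π / σ ^ 2 := by positivity
  refine (ZLattice.summable_exp_neg_mul_norm_sub_sq Λ hc (-u)).congr fun ℓ ↦ ?_
  rw [gaussFun, sub_neg_eq_add]
  ring_nf

variable [InnerProductSpace ℝ V]

theorem gaussFun_add (σ : ℝ) (x w : V) :
    gaussFun σ (x + w) = gaussFun σ x * gaussFun σ w * exp (-(2 * π * inner ℝ x w / σ ^ 2)) := by
  simp only [gaussFun, ← exp_add, norm_add_sq_real]
  ring_nf

theorem gaussFun_add_add_gaussFun_sub (σ : ℝ) (x w : V) :
    gaussFun σ (x + w) + gaussFun σ (x - w) =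
      2 * gaussFun σ x * gaussFun σ w * cosh (2 * π * inner ℝ x w / σ ^ 2) := by
  have hneg : gaussFun σ (-w) = gaussFun σ w := by rw [gaussFun, gaussFun, norm_neg]
  rw [sub_eq_add_neg, gaussFun_add, gaussFun_add, hneg, inner_neg_right, cosh_eq]
  ring_nf

theorem two_mul_gaussFun_mul_le_gaussFun_add_add_gaussFun_sub (σ : ℝ) (x w : V) :
    2 * gaussFun σ w * gaussFun σ x ≤ gaussFun σ (x + w) + gaussFun σ (x - w) := by
  rw [gaussFun_add_add_gaussFun_sub]
  have : 0 ≤ gaussFun σ x * gaussFun σ w := by unfold gaussFun; positivity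
  nlinarith [one_le_cosh (2 * π * inner ℝ x w / σ ^ 2)]

end Gaussian

/-- For a lattice `Λ` in a Euclidean space `V`, `t, w ∈ V` and
`σ > 0`, `ρ_σ(Λ + t + w) + ρ_σ(Λ + t - w) ≥ 2 ρ_σ(w) ρ_σ(Λ + t)`. -/
theorem stmt10 {V : Type*} [NormedAddCommGroup V] [InnerProductSpace ℝ V]
    [FiniteDimensional ℝ V]
    (Λ : Submodule ℤ V) [DiscreteTopology Λ] (t w : V) (σ : ℝ) (hσ : 0 < σ) :
    2 * gaussFun σ w * ∑' ℓ : Λ, gaussFun σ ((ℓ : V) + t) ≤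
      (∑' ℓ : Λ, gaussFun σ ((ℓ : V) + t + w)) +
        ∑' ℓ : Λ, gaussFun σ ((ℓ : V) + t - w) := by
  have hplus : Summable fun ℓ : Λ ↦ gaussFun σ ((ℓ : V) + t + w) := by
    simpa only [add_assoc] using summable_gaussFun_add Λ hσ.ne' (t + w)
  have hminus : Summable fun ℓ : Λ ↦ gaussFun σ ((ℓ : V) + t - w) := by
    simpa only [add_sub_assoc] using summable_gaussFun_add Λ hσ.ne' (t - w)
  rw [← tsum_mul_left, ← hplus.tsum_add hminus]
  exact Summable.tsum_le_tsum
    (fun ℓ ↦ two_mul_gaussFun_mul_le_gaussFun_add_add_gaussFun_sub σ ((ℓ : V) + t) w)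
    ((summable_gaussFun_add Λ hσ.ne' t).mul_left _) (hplus.add hminus)
end

section
/- Let $(\Omega, \mathcal{S})$ be a measurable space with probability measures $P, Q$, and let $U \in \mathcal{S}$ be an event with $P(U), Q(U) > 0$. Then the statistical distance of the conditioned measures satisfies $SD(P|_U, Q|_U) \le 2 \cdot P(U)^{-1} \cdot SD(P, Q)$, where $SD(P,Q) = \sup_{X \in \mathcal{S}} |P(X) - Q(X)|$ and $P|_U(X) = P(X \cap U)/P(U)$. -/
open MeasureTheory

/-- The statistical distance `SD(P,Q) = sup_{measurable X} |P(X) - Q(X)|`. -/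
noncomputable def SD {Ω : Type*} [MeasurableSpace Ω] (P Q : Measure Ω) : ℝ :=
  ⨆ X : {X : Set Ω // MeasurableSet X}, |(P X.1).toReal - (Q X.1).toReal|

lemma SD_ge {Ω : Type*} [MeasurableSpace Ω] (P Q : Measure Ω)
    [IsProbabilityMeasure P] [IsProbabilityMeasure Q]
    {S : Set Ω} (hS : MeasurableSet S) :
    |(P S).toReal - (Q S).toReal| ≤ SD P Q := by
  have hb : BddAbove (Set.range fun X : {X : Set Ω // MeasurableSet X} =>
      |(P X.1).toReal - (Q X.1).toReal|) := by
    refine ⟨1, ?_⟩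
    rintro x ⟨X, rfl⟩
    have h1 : (P X.1).toReal ≤ 1 := by
      have := prob_le_one (μ := P) (s := X.1)
      simpa using ENNReal.toReal_mono (by simp) this
    have h2 : (Q X.1).toReal ≤ 1 := by
      have := prob_le_one (μ := Q) (s := X.1)
      simpa using ENNReal.toReal_mono (by simp) this
    have h3 : 0 ≤ (P X.1).toReal := ENNReal.toReal_nonneg
    have h4 : 0 ≤ (Q X.1).toReal := ENNReal.toReal_nonneg
    rw [abs_le]; constructor <;> linarith
  exact le_ciSup hb ⟨S, hS⟩

/-- For probability measures `P, Q` and an event `U` of nonzero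
weight for both, the conditioned measures satisfy
`SD(P|_U, Q|_U) ≤ 2 P(U)⁻¹ SD(P,Q)`. -/
theorem stmt13 {Ω : Type*} [MeasurableSpace Ω] (P Q : Measure Ω)
    [IsProbabilityMeasure P] [IsProbabilityMeasure Q]
    (U : Set Ω) (hU : MeasurableSet U) (hP : P U ≠ 0) (hQ : Q U ≠ 0) :
    SD (ProbabilityTheory.cond P U) (ProbabilityTheory.cond Q U) ≤
      2 * (P U).toReal⁻¹ * SD P Q := by
  apply ciSup_le
  rintro ⟨X, hX⟩
  rw [ProbabilityTheory.cond_apply hU, ProbabilityTheory.cond_apply hU,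
    ENNReal.toReal_mul, ENNReal.toReal_mul, ENNReal.toReal_inv, ENNReal.toReal_inv]
  set a := (P U).toReal with ha_def
  set b := (Q U).toReal with hb_def
  set p := (P (U ∩ X)).toReal with hp_def
  set q := (Q (U ∩ X)).toReal with hq_def
  have hPU : P U ≠ ⊤ := measure_ne_top _ _
  have hQU : Q U ≠ ⊤ := measure_ne_top _ _
  have ha : 0 < a := ENNReal.toReal_pos hP hPU
  have hb : 0 < b := ENNReal.toReal_pos hQ hQU
  have hp0 : 0 ≤ p := ENNReal.toReal_nonneg
  have hq0 : 0 ≤ q := ENNReal.toReal_nonneg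
  have hqb : q ≤ b := by
    apply ENNReal.toReal_mono hQU
    exact measure_mono Set.inter_subset_left
  have hpa : p ≤ a := by
    apply ENNReal.toReal_mono hPU
    exact measure_mono Set.inter_subset_left
  have hpq : |p - q| ≤ SD P Q := SD_ge P Q (hU.inter hX)
  have hab : |a - b| ≤ SD P Q := SD_ge P Q hU
  have hS0 : 0 ≤ SD P Q := le_trans (abs_nonneg _) hab
  have h1 : a⁻¹ * p - b⁻¹ * q = a⁻¹ * (p - q) + (a⁻¹ - b⁻¹) * q := by
    field_simp; ring
  have habs : |a⁻¹ - b⁻¹| = |a - b| / (a * b) := by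
    rw [show a⁻¹ - b⁻¹ = (b - a) / (a * b) by field_simp, abs_div,
      abs_of_pos (mul_pos ha hb), abs_sub_comm]
  have h2 : |(a⁻¹ - b⁻¹) * q| ≤ a⁻¹ * |a - b| := by
    rw [abs_mul, abs_of_nonneg hq0, habs]
    calc |a - b| / (a * b) * q ≤ |a - b| / (a * b) * b := by
          apply mul_le_mul_of_nonneg_left hqb; positivity
      _ = a⁻¹ * |a - b| := by field_simp
  have hinv : 0 ≤ a⁻¹ := le_of_lt (inv_pos.mpr ha)
  calc |a⁻¹ * p - b⁻¹ * q| = |a⁻¹ * (p - q) + (a⁻¹ - b⁻¹) * q| := by rw [h1]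
    _ ≤ |a⁻¹ * (p - q)| + |(a⁻¹ - b⁻¹) * q| := abs_add_le _ _
    _ ≤ a⁻¹ * SD P Q + a⁻¹ * SD P Q := by
        apply add_le_add
        · rw [abs_mul, abs_of_nonneg hinv]
          exact mul_le_mul_of_nonneg_left hpq hinv
        · exact le_trans h2 (mul_le_mul_of_nonneg_left hab hinv)
    _ = 2 * a⁻¹ * SD P Q := by ring
end

section
/- For each integer $m \ge 1$ let $S_m(f) = \sum_{j=1}^m f(j)$ and for $r \ge 2$, $1 \le k < r$ let $S_{r,k}(f) = S_r(f) - S_k(f) - S_{r-k}(f)$. For $f(x) = \log(x+1)$ one has $S_{r,k}(f) \le (r+1)\log 2 + \tfrac{3}{2}\log 2 - \tfrac{7}{8}$, and for $f(x) = \frac{1}{x+1}$ one has $S_k(f) + S_{r-k}(f) \le 2\log(\tfrac{r}{2}+1)$. -/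
/-! The logarithmic sums are `log (m + 1)!`, so with `r = k + b` the first bound reduces to
`(k + b + 1)! ≤ 2 ^ (k + b + 1) (k + 1)! (b + 1)!`, which follows from `(n choose i) ≤ 2 ^ n`
(the remaining `3/2 log 2 - 7/8` is positive slack). For the second,
`1 / (j + 1) ≤ log (j + 1) - log j` telescopes to `S_m ≤ log (m + 1)`, and
`log (k + 1) + log (b + 1) ≤ 2 log ((k + b) / 2 + 1)` is AM–GM. -/

open Nat Real Finset

theorem Nat.factorial_add_add_one_le (a b : ℕ) :
    (a + b + 1)! ≤ 2 ^ (a + b + 1) * ((a + 1)! * (b + 1)!) := by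
  have hsucc : 2 * (a + b + 1)! ≤ (a + b + 2)! := by
    rw [factorial_succ (a + b + 1)]
    gcongr
    omega
  have hchoose : (a + b + 2)! ≤ 2 ^ (a + b + 2) * ((a + 1)! * (b + 1)!) := by
    rw [show a + b + 2 = (a + 1) + (b + 1) by ring, ← add_choose_mul_factorial_mul_factorial,
      mul_assoc]
    gcongr
    exact choose_le_two_pow _ _
  rw [pow_succ'] at hchoose
  linarith

theorem Real.log_factorial_add_add_one_sub_le (a b : ℕ) :
    log (a + b + 1)! - log (a + 1)! - log (b + 1)! ≤ (a + b + 1) * log 2 := by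
  have h := log_le_log (by positivity) (mod_cast factorial_add_add_one_le a b :
    ((a + b + 1)! : ℝ) ≤ (2 ^ (a + b + 1) * ((a + 1)! * (b + 1)!) : ℕ))
  push_cast at h
  rw [log_mul (by positivity) (by positivity), log_mul (by positivity) (by positivity),
    log_pow] at h
  push_cast at h
  linarith

theorem Real.sum_Icc_log_add_one (m : ℕ) :
    ∑ j ∈ Icc 1 m, log ((j : ℝ) + 1) = log (m + 1)! := by
  induction m with
  | zero => simp
  | succ n ih =>
    rw [sum_Icc_succ_top (by omega), ih, factorial_succ (n + 1), cast_mul,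
      log_mul (by positivity) (by positivity)]
    push_cast
    ring

theorem Real.one_div_add_two_le_log_sub_log (x : ℝ) (hx : 0 ≤ x) :
    1 / (x + 2) ≤ log (x + 2) - log (x + 1) := by
  have h := one_sub_inv_le_log_of_pos (show 0 < (x + 2) / (x + 1) by positivity)
  rwa [log_div (by positivity) (by positivity), inv_div, one_sub_div (by positivity),
    show x + 2 - (x + 1) = 1 by ring] at h

theorem Real.sum_Icc_one_div_add_one_le_log (m : ℕ) :
    ∑ j ∈ Icc 1 m, 1 / ((j : ℝ) + 1) ≤ log (m + 1) := by
  induction m with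
  | zero => simp
  | succ n ih =>
    rw [sum_Icc_succ_top (by omega)]
    have h := one_div_add_two_le_log_sub_log n n.cast_nonneg
    push_cast
    rw [show (n : ℝ) + 1 + 1 = n + 2 by ring]
    linarith

theorem Real.log_add_log_le_two_mul_log_half_add {x y : ℝ} (hx : 0 < x) (hy : 0 < y) :
    log x + log y ≤ 2 * log ((x + y) / 2) := by
  calc log x + log y = log (x * y) := (log_mul hx.ne' hy.ne').symm
    _ ≤ log (((x + y) / 2) ^ 2) := log_le_log (by positivity) (by nlinarith [sq_nonneg (x - y)])
    _ = 2 * log ((x + y) / 2) := by rw [log_pow]; norm_num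

theorem stmt15_general (r k : ℕ) (hkr : k < r) :
    ((∑ j ∈ Finset.Icc 1 r, Real.log ((j : ℝ) + 1))
        - (∑ j ∈ Finset.Icc 1 k, Real.log ((j : ℝ) + 1))
        - (∑ j ∈ Finset.Icc 1 (r - k), Real.log ((j : ℝ) + 1))
      ≤ ((r : ℝ) + 1) * Real.log 2 + 3 / 2 * Real.log 2 - 7 / 8)
    ∧ ((∑ j ∈ Finset.Icc 1 k, (1 : ℝ) / ((j : ℝ) + 1))
        + (∑ j ∈ Finset.Icc 1 (r - k), (1 : ℝ) / ((j : ℝ) + 1))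
      ≤ 2 * Real.log ((r : ℝ) / 2 + 1)) := by
  obtain ⟨b, rfl⟩ := Nat.exists_eq_add_of_le hkr.le
  rw [Nat.add_sub_cancel_left]
  constructor
  · rw [sum_Icc_log_add_one, sum_Icc_log_add_one, sum_Icc_log_add_one]
    have hfactorial := log_factorial_add_add_one_sub_le k b
    have hlog2 := log_two_gt_d9
    push_cast
    linarith
  · have hamgm := log_add_log_le_two_mul_log_half_add (x := k + 1) (y := b + 1)
      (by positivity) (by positivity)
    rw [show ((k : ℝ) + 1 + (b + 1)) / 2 = (k + b : ℕ) / 2 + 1 by push_cast; ring] at hamgm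
    linarith [sum_Icc_one_div_add_one_le_log k, sum_Icc_one_div_add_one_le_log b]

/-- With `S_m(f) = ∑_{j=1}^m f(j)` and
`S_{r,k}(f) = S_r(f) - S_k(f) - S_{r-k}(f)`, for `f(x) = log(x+1)` one has
`S_{r,k}(f) ≤ (r+1) log 2 + (3/2) log 2 - 7/8`, and for `f(x) = 1/(x+1)` one
has `S_k(f) + S_{r-k}(f) ≤ 2 log(r/2 + 1)`. -/
theorem stmt15 (r k : ℕ) (hr : 2 ≤ r) (hk1 : 1 ≤ k) (hkr : k < r) :
    ((∑ j ∈ Finset.Icc 1 r, Real.log ((j : ℝ) + 1))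
        - (∑ j ∈ Finset.Icc 1 k, Real.log ((j : ℝ) + 1))
        - (∑ j ∈ Finset.Icc 1 (r - k), Real.log ((j : ℝ) + 1))
      ≤ ((r : ℝ) + 1) * Real.log 2 + 3 / 2 * Real.log 2 - 7 / 8)
    ∧ ((∑ j ∈ Finset.Icc 1 k, (1 : ℝ) / ((j : ℝ) + 1))
        + (∑ j ∈ Finset.Icc 1 (r - k), (1 : ℝ) / ((j : ℝ) + 1))
      ≤ 2 * Real.log ((r : ℝ) / 2 + 1)) :=
  stmt15_general r k hkr
end

section
/- Let $L$ be a module lattice of rank $n$ over a number field $K$ of degree $d$ (with discriminant $\Delta_K$), viewed as a Euclidean lattice of rank $nd$, and let $t \ge 1$. If $L$ contains no rank-1 sub-module lattice $L'$ with $(t \cdot \det(L'))^{1/\mathrm{rank}(L')} \le \det(L)^{1/\mathrm{rank}(L)}$ (i.e., no $t$-destabilising rank-1 sublattice in the Grayson–Stuhler sense), then $\lambda_1(L) > t^{-1/d}\,|\Delta_K|^{-1/(2d)}\,\det(L)^{1/(nd)}$. -/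
/-!
A shortest nonzero vector `x₀` of `L` exists because `L` is discrete, and it realises `λ₁(L)`.
If `‖x₀‖` were at most `t^{-1/d} |Δ_K|^{-1/(2d)} det(L)^{1/(nd)}`, raising to the `d`-th power
would give `t ‖x₀‖^d √|Δ_K| ≤ det(L)^{1/n}`, i.e. `𝓞_K x₀` would be `t`-destabilising.
-/

open scoped NumberField

theorem succMin_one_eq_norm {R V : Type*} [DivisionRing R] [NormedAddCommGroup V]
    [Module R V] {M : Set V} {x₀ : V} (hx₀M : x₀ ∈ M) (hx₀ : x₀ ≠ 0)
    (hmin : ∀ x ∈ M, x ≠ 0 → ‖x₀‖ ≤ ‖x‖) :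
    succMin R M 1 = ‖x₀‖ := by
  have hx₀mem : ‖x₀‖ ∈ {lam : ℝ | 0 < lam ∧ ∃ v : Fin 1 → V,
      (∀ i, v i ∈ M) ∧ LinearIndependent R v ∧ ∀ i, ‖v i‖ ≤ lam} :=
    ⟨norm_pos_iff.2 hx₀, fun _ => x₀, fun _ => hx₀M,
      linearIndependent_unique_iff.2 hx₀, fun _ => le_rfl⟩
  refine le_antisymm (csInf_le ⟨0, fun _ h => h.1.le⟩ hx₀mem) (le_csInf ⟨_, hx₀mem⟩ ?_)
  rintro lam ⟨-, v, hvM, hv, hvlam⟩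
  exact (hmin (v 0) (hvM 0) (hv.ne_zero 0)).trans (hvlam 0)

theorem AddSubgroup.exists_ne_zero_forall_norm_le {E : Type*} [NormedAddCommGroup E]
    [ProperSpace E] (H : AddSubgroup E) [DiscreteTopology H] (hH : H ≠ ⊥) :
    ∃ x ∈ H, x ≠ 0 ∧ ∀ y ∈ H, y ≠ 0 → ‖x‖ ≤ ‖y‖ := by
  set s : Set E := Subtype.val '' {x : H | x ≠ 0}
  have hs : IsClosed s :=
    H.isClosed_of_discrete.isClosedEmbedding_subtypeVal.isClosedMap _ (isClosed_discrete _)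
  obtain ⟨x, hxH, hx⟩ := H.bot_or_exists_ne_zero.resolve_left hH
  obtain ⟨_, ⟨x₀, hx₀, rfl⟩, hdist⟩ :=
    hs.exists_infDist_eq_dist ⟨x, ⟨x, hxH⟩, by simpa using hx, rfl⟩ 0
  refine ⟨x₀, x₀.2, by simpa using hx₀, fun y hyH hy => ?_⟩
  have hys : y ∈ s := ⟨⟨y, hyH⟩, by simpa using hy, rfl⟩
  simpa only [hdist, dist_zero_left] using Metric.infDist_le_dist_of_mem (x := 0) hys

theorem IsZLattice.ne_bot {E : Type*} [NormedAddCommGroup E] [NormedSpace ℝ E] [Nontrivial E]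
    (L : Submodule ℤ E) [DiscreteTopology L] [IsZLattice ℝ L] : L ≠ ⊥ := by
  intro hL
  have hspan := IsZLattice.span_top (K := ℝ) (L := L)
  rw [hL, Submodule.bot_coe, Submodule.span_zero_singleton] at hspan
  exact bot_ne_top hspan

theorem mul_pow_mul_sqrt_le_rpow_of_le {t Δ D r : ℝ} (ht : 0 < t) (hΔ : 0 < Δ) (hD : 0 ≤ D)
    (hr : 0 ≤ r) {n d : ℕ} (hd : 0 < d)
    (h : r ≤ t ^ (-(1 : ℝ) / (d : ℝ)) * Δ ^ (-(1 : ℝ) / (2 * (d : ℝ))) *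
      D ^ ((1 : ℝ) / ((n * d : ℕ) : ℝ))) :
    t * (r ^ d * Real.sqrt Δ) ≤ D ^ ((1 : ℝ) / (n : ℝ)) := by
  have ht_exp : -(1 : ℝ) / d = -(d : ℝ)⁻¹ := by ring
  have hΔ_exp : -(1 : ℝ) / (2 * d) = -(1 / 2 * (d : ℝ)⁻¹) := by ring
  have hD_exp : (1 : ℝ) / ((n * d : ℕ) : ℝ) = 1 / n * (d : ℝ)⁻¹ := by push_cast; ring
  have hbound : t ^ (-(1 : ℝ) / (d : ℝ)) * Δ ^ (-(1 : ℝ) / (2 * (d : ℝ))) *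
      D ^ ((1 : ℝ) / ((n * d : ℕ) : ℝ)) = (D ^ ((1 : ℝ) / n) / (t * Real.sqrt Δ)) ^ (d : ℝ)⁻¹ := by
    rw [ht_exp, hΔ_exp, hD_exp, Real.rpow_neg ht.le, Real.rpow_neg hΔ.le,
      Real.div_rpow (by positivity) (by positivity), Real.mul_rpow ht.le (by positivity),
      Real.sqrt_eq_rpow, ← Real.rpow_mul hD, ← Real.rpow_mul hΔ.le]
    ring
  rw [hbound, Real.le_rpow_inv_iff_of_pos hr (by positivity) (Nat.cast_pos.2 hd),
    Real.rpow_natCast, le_div_iff₀ (by positivity)] at h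
  linarith

/-- Let `L` be a module lattice of rank `n` over a number field
`K` of degree `d` and discriminant `Δ_K`, viewed as a Euclidean lattice of rank
`nd`, and `t ≥ 1`. If `L` has no `t`-destabilising rank-1 sub-module lattice
(for the principal rank-1 sublattice `𝓞_K x`, of determinant `‖x‖^d √|Δ_K|`,
this means `t ‖x‖^d √|Δ_K| ≤ det(L)^{1/n}` never holds for `x ∈ L` nonzero),
then `λ₁(L) > t^{-1/d} |Δ_K|^{-1/(2d)} det(L)^{1/(nd)}`. -/
theorem stmt16
    {K : Type*} [Field K] [NumberField K]
    {V : Type*} [NormedAddCommGroup V] [InnerProductSpace ℝ V] [FiniteDimensional ℝ V]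
    [MeasurableSpace V] [BorelSpace V]
    [Module (𝓞 K) V]
    (μ : MeasureTheory.Measure V) [μ.IsAddHaarMeasure]
    (n : ℕ) (hn : 0 < n)
    (hdim : Module.finrank ℝ V = n * Module.finrank ℚ K)
    (L : Submodule (𝓞 K) V)
    [DiscreteTopology (L.restrictScalars ℤ)] [IsZLattice ℝ (L.restrictScalars ℤ)]
    (t : ℝ) (ht : 1 ≤ t)
    (hstab : ∀ x ∈ L, x ≠ 0 →
      ¬ (t * (‖x‖ ^ Module.finrank ℚ K * Real.sqrt |(NumberField.discr K : ℝ)|) ≤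
          ZLattice.covolume (L.restrictScalars ℤ) μ ^ ((1 : ℝ) / (n : ℝ)))) :
    t ^ (-(1 : ℝ) / (Module.finrank ℚ K : ℝ)) *
        |(NumberField.discr K : ℝ)| ^ (-(1 : ℝ) / (2 * (Module.finrank ℚ K : ℝ))) *
        ZLattice.covolume (L.restrictScalars ℤ) μ ^
          ((1 : ℝ) / ((n * Module.finrank ℚ K : ℕ) : ℝ)) <
      succMin ℝ (L : Set V) 1 := by
  have : Nontrivial V := Module.nontrivial_of_finrank_pos (R := ℝ)
    (hdim ▸ Nat.mul_pos hn Module.finrank_pos)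
  have : DiscreteTopology (L.restrictScalars ℤ).toAddSubgroup :=
    inferInstanceAs (DiscreteTopology (L.restrictScalars ℤ))
  obtain ⟨x₀, hx₀L, hx₀, hmin⟩ : ∃ x₀ ∈ L, x₀ ≠ 0 ∧ ∀ x ∈ L, x ≠ 0 → ‖x₀‖ ≤ ‖x‖ :=
    (L.restrictScalars ℤ).toAddSubgroup.exists_ne_zero_forall_norm_le
      ((Submodule.toAddSubgroup_injective.ne (IsZLattice.ne_bot _)).trans_eq
        Submodule.bot_toAddSubgroup)
  rw [succMin_one_eq_norm hx₀L hx₀ hmin]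
  by_contra! hshort
  exact hstab x₀ hx₀L hx₀ <| mul_pow_mul_sqrt_le_rpow_of_le (by linarith)
    (abs_pos.2 (Int.cast_ne_zero.2 (NumberField.discr_ne_zero K)))
    (ZLattice.covolume_pos _ μ).le (norm_nonneg x₀) Module.finrank_pos hshort
end
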